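/- With the same setup ($[\eta_1,\eta_2]=2\eta_3$ and cyclic, $\sigma^1\centerdot\sigma^2=-2\sigma^3$ and cyclic, $\sigma^i\centerdot\sigma^i=0$), let $B = B_1\eta_1\otimes\sigma^1 + B_2\eta_2\otimes\sigma^2 + B_3\eta_3\otimes\sigma^3$. Then $[[B\centerdot B]\centerdot[B\centerdot B]] = -512 B_1^2 B_2 B_3\, \eta_1\otimes\sigma^1 - 512 B_1 B_2^2 B_3\, \eta_2\otimes\sigma^2 - 512 B_1 B_2 B_3^2\, \eta_3\otimes\sigma^3$. -/

import Mathlib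

/-!
In the diagonal frame the bracket `[· ∙ ·]` only couples `ηᵢ ⊗ σᵢ` with `ηⱼ ⊗ σⱼ` for `i ≠ j`,
and then lands on the third diagonal element `ηₖ ⊗ σₖ` with factor `2 · (-2) = -4` (in either
order, since both structure constants change sign). Hence diagonal elements are closed under the
bracket, with coefficients `-4 (aⱼ bₖ + aₖ bⱼ)`. Applied to `B` this gives
`[B ∙ B] = -8 B₂B₃ η₁σ¹ - 8 B₃B₁ η₂σ² - 8 B₁B₂ η₃σ³`, and applied once more
`-8 · (-8 B₃B₁)(-8 B₁B₂) = -512 B₁² B₂ B₃`, and cyclically.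
-/

open TensorProduct

section DiagonalFrame

variable {R L M : Type*} [CommRing R] [LieRing L] [LieAlgebra R L] [AddCommGroup M] [Module R M]

def diagFrame (η1 η2 η3 : L) (σ1 σ2 σ3 : M) (c1 c2 c3 : R) : L ⊗[R] M :=
  c1 • (η1 ⊗ₜ σ1) + c2 • (η2 ⊗ₜ σ2) + c3 • (η3 ⊗ₜ σ3)

theorem bracket_diagFrame_diagFrame (D : M →ₗ[R] M →ₗ[R] M) {η1 η2 η3 : L} {σ1 σ2 σ3 : M}
    (hη12 : ⁅η1, η2⁆ = (2:R) • η3) (hη23 : ⁅η2, η3⁆ = (2:R) • η1)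
    (hη31 : ⁅η3, η1⁆ = (2:R) • η2)
    (hσ12 : D σ1 σ2 = (-2:R) • σ3) (hσ23 : D σ2 σ3 = (-2:R) • σ1)
    (hσ31 : D σ3 σ1 = (-2:R) • σ2)
    (hσ21 : D σ2 σ1 = (2:R) • σ3) (hσ32 : D σ3 σ2 = (2:R) • σ1)
    (hσ13 : D σ1 σ3 = (2:R) • σ2)
    {bd : (L ⊗[R] M) →ₗ[R] (L ⊗[R] M) →ₗ[R] (L ⊗[R] M)}
    (hbd : ∀ (ξ η : L) (α β : M), bd (ξ ⊗ₜ α) (η ⊗ₜ β) = ⁅ξ, η⁆ ⊗ₜ (D α β))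
    (a1 a2 a3 b1 b2 b3 : R) :
    bd (diagFrame η1 η2 η3 σ1 σ2 σ3 a1 a2 a3) (diagFrame η1 η2 η3 σ1 σ2 σ3 b1 b2 b3) =
      diagFrame η1 η2 η3 σ1 σ2 σ3
        (-4 * (a2 * b3 + a3 * b2)) (-4 * (a3 * b1 + a1 * b3)) (-4 * (a1 * b2 + a2 * b1)) := by
  have hη21 : ⁅η2, η1⁆ = (-2:R) • η3 := by rw [← lie_skew, hη12]; module
  have hη32 : ⁅η3, η2⁆ = (-2:R) • η1 := by rw [← lie_skew, hη23]; module
  have hη13 : ⁅η1, η3⁆ = (-2:R) • η2 := by rw [← lie_skew, hη31]; module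
  simp only [diagFrame, map_add, map_smul, LinearMap.add_apply, LinearMap.smul_apply, hbd,
    hη12, hη23, hη31, hη21, hη32, hη13, hσ12, hσ23, hσ31, hσ21, hσ32, hσ13,
    lie_self, zero_tmul, smul_zero, tmul_smul, ← smul_tmul', smul_smul]
  module

end DiagonalFrame

theorem stmt_15_general {L M : Type*} [LieRing L] [LieAlgebra ℝ L]
    [AddCommGroup M] [Module ℝ M]
    (D : M →ₗ[ℝ] M →ₗ[ℝ] M)  -- the product `∙` on self-dual 2-forms
    (η1 η2 η3 : L) (σ1 σ2 σ3 : M)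
    (hη12 : ⁅η1, η2⁆ = (2:ℝ) • η3) (hη23 : ⁅η2, η3⁆ = (2:ℝ) • η1)
    (hη31 : ⁅η3, η1⁆ = (2:ℝ) • η2)
    (hσ12 : D σ1 σ2 = (-2:ℝ) • σ3) (hσ23 : D σ2 σ3 = (-2:ℝ) • σ1)
    (hσ31 : D σ3 σ1 = (-2:ℝ) • σ2)
    (hσ21 : D σ2 σ1 = (2:ℝ) • σ3) (hσ32 : D σ3 σ2 = (2:ℝ) • σ1)
    (hσ13 : D σ1 σ3 = (2:ℝ) • σ2)
    -- the bracket `[· ∙ ·]` on `L ⊗ M`, `[ξ⊗α ∙ η⊗β] = ⁅ξ,η⁆ ⊗ (α ∙ β)`: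
    (bd : (L ⊗[ℝ] M) →ₗ[ℝ] (L ⊗[ℝ] M) →ₗ[ℝ] (L ⊗[ℝ] M))
    (hbd : ∀ (ξ η : L) (α β : M), bd (ξ ⊗ₜ α) (η ⊗ₜ β) = ⁅ξ, η⁆ ⊗ₜ (D α β))
    (B1 B2 B3 : ℝ)
    (B : L ⊗[ℝ] M)
    (hB : B = B1 • (η1 ⊗ₜ σ1) + B2 • (η2 ⊗ₜ σ2) + B3 • (η3 ⊗ₜ σ3)) :
    bd (bd B B) (bd B B) =
      (-512 * B1^2 * B2 * B3) • (η1 ⊗ₜ σ1) + (-512 * B1 * B2^2 * B3) • (η2 ⊗ₜ σ2)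
        + (-512 * B1 * B2 * B3^2) • (η3 ⊗ₜ σ3) := by
  have bracket := bracket_diagFrame_diagFrame D hη12 hη23 hη31 hσ12 hσ23 hσ31 hσ21 hσ32 hσ13 hbd
  have hB' : B = diagFrame η1 η2 η3 σ1 σ2 σ3 B1 B2 B3 := hB
  rw [hB', bracket, bracket, diagFrame]
  module

theorem stmt_15 {L M : Type*} [LieRing L] [LieAlgebra ℝ L]
    [AddCommGroup M] [Module ℝ M]
    (D : M →ₗ[ℝ] M →ₗ[ℝ] M)  -- the product `∙` on self-dual 2-forms
    (η1 η2 η3 : L) (σ1 σ2 σ3 : M)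
    (hη12 : ⁅η1, η2⁆ = (2:ℝ) • η3) (hη23 : ⁅η2, η3⁆ = (2:ℝ) • η1)
    (hη31 : ⁅η3, η1⁆ = (2:ℝ) • η2)
    (hσ12 : D σ1 σ2 = (-2:ℝ) • σ3) (hσ23 : D σ2 σ3 = (-2:ℝ) • σ1)
    (hσ31 : D σ3 σ1 = (-2:ℝ) • σ2)
    (hσ21 : D σ2 σ1 = (2:ℝ) • σ3) (hσ32 : D σ3 σ2 = (2:ℝ) • σ1)
    (hσ13 : D σ1 σ3 = (2:ℝ) • σ2)
    (hσ11 : D σ1 σ1 = 0) (hσ22 : D σ2 σ2 = 0) (hσ33 : D σ3 σ3 = 0)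
    -- the bracket `[· ∙ ·]` on `L ⊗ M`, `[ξ⊗α ∙ η⊗β] = ⁅ξ,η⁆ ⊗ (α ∙ β)`:
    (bd : (L ⊗[ℝ] M) →ₗ[ℝ] (L ⊗[ℝ] M) →ₗ[ℝ] (L ⊗[ℝ] M))
    (hbd : ∀ (ξ η : L) (α β : M), bd (ξ ⊗ₜ α) (η ⊗ₜ β) = ⁅ξ, η⁆ ⊗ₜ (D α β))
    (B1 B2 B3 : ℝ)
    (B : L ⊗[ℝ] M)
    (hB : B = B1 • (η1 ⊗ₜ σ1) + B2 • (η2 ⊗ₜ σ2) + B3 • (η3 ⊗ₜ σ3)) :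
    bd (bd B B) (bd B B) =
      (-512 * B1^2 * B2 * B3) • (η1 ⊗ₜ σ1) + (-512 * B1 * B2^2 * B3) • (η2 ⊗ₜ σ2)
        + (-512 * B1 * B2 * B3^2) • (η3 ⊗ₜ σ3) :=
  stmt_15_general D η1 η2 η3 σ1 σ2 σ3 hη12 hη23 hη31 hσ12 hσ23 hσ31 hσ21 hσ32 hσ13 bd hbd B1 B2 B3 B
    hB
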